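/- arXiv:2504.05044 — 3 statements merged into one kernel-verified Lean document; each statement's English description precedes it below -/
import Mathlib

section
/- Let ρ̄ be a probability measure on ℝ^d and let φ ∈ L^∞(ℝ^d × ℝ^d) satisfy the two cancellation properties ∫ φ(x,y) ρ̄(dx) = 0 for all y and ∫ φ(x,y) ρ̄(dy) = 0 for all x, and suppose γ := C̃ ‖φ‖_{L^∞}^2 < 1 for a suitable universal constant C̃. Then sup over integers N > 2 of ∫_{ℝ^{dN}} exp( N | ⟨φ, μ_N ⊗ μ_N⟩ | ) ρ̄^{⊗N}(dx) ≤ 2/(1−γ) < ∞, where μ_N = (1/N) Σ_{i=1}^N δ_{x_i} for x = (x_1,…,x_N). -/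
/-!
Write `S(x) = ∑ᵢⱼ φ(xᵢ, xⱼ)`. Since `exp |t| ≤ 2 cosh t`, it suffices to bound the even moments
of `S / N`. Expanding `S ^ p` gives one term `∏ₐ φ(x_{iₐ}, x_{jₐ})` per word of `p` index pairs.
If some index occurs exactly once in a word, integrating out that coordinate first kills the term,
by the cancellation properties of `φ`. The surviving words use at most `p` distinct indices, so
there are at most `N ^ p p ^ (2p) / p!` of them, each bounded by `‖φ‖_∞ ^ p`. For `p = 2m`, the
bound `q ^ q ≤ e ^ q q!` then gives `E[(S/N) ^ 2m] / (2m)! ≤ (e⁴ ‖φ‖_∞²) ^ m`, and summing the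
geometric series yields `2 / (1 - γ)` with `C̃ = e⁴`.
-/

open MeasureTheory Finset Real

section Resample

variable {ι : Type*} [Fintype ι] [DecidableEq ι] {X : ι → Type*} [∀ i, MeasurableSpace (X i)]
  (μ : ∀ i, Measure (X i)) [∀ i, IsProbabilityMeasure (μ i)]

theorem measurePreserving_update (k : ι) :
    MeasurePreserving (fun p : (∀ i, X i) × X k => Function.update p.1 k p.2)
      ((Measure.pi μ).prod (μ k)) (Measure.pi μ) := by
  refine ⟨measurable_update', (Measure.pi_eq fun s hs => ?_).symm⟩
  have hpre : (fun p : (∀ i, X i) × X k => Function.update p.1 k p.2) ⁻¹' Set.univ.pi s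
      = Set.univ.pi (Function.update s k Set.univ) ×ˢ s k := by
    ext ⟨z, y⟩
    simp only [Set.mem_preimage, Set.mem_univ_pi, Set.mem_prod]
    rw [Function.forall_update_iff (p := fun i v => v ∈ s i),
      Function.forall_update_iff (p := fun i v => z i ∈ v)]
    simp [and_comm]
  rw [Measure.map_apply measurable_update' (.univ_pi hs), hpre, Measure.prod_prod,
    Measure.pi_pi]
  simp_rw [Function.apply_update (fun i => μ i), measure_univ]
  rw [prod_update_of_mem (mem_univ k), one_mul,
    ← prod_eq_prod_sdiff_singleton_mul (mem_univ k)]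

theorem integral_pi_eq_integral_integral_update (k : ι) {f : (∀ i, X i) → ℝ}
    (hf : Integrable f (Measure.pi μ)) :
    ∫ x, f x ∂Measure.pi μ = ∫ z, ∫ y, f (Function.update z k y) ∂μ k ∂Measure.pi μ := by
  have h := measurePreserving_update μ k
  calc ∫ x, f x ∂Measure.pi μ
      = ∫ x, f x ∂((Measure.pi μ).prod (μ k)).map (fun p => Function.update p.1 k p.2) := by
        rw [h.map_eq]
    _ = ∫ p, f (Function.update p.1 k p.2) ∂(Measure.pi μ).prod (μ k) :=
        integral_map h.measurable.aemeasurable (by rw [h.map_eq]; exact hf.1)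
    _ = _ := integral_prod _ ((h.integrable_comp hf.1).mpr hf)

end Resample

theorem exp_abs_le_two_mul_cosh (t : ℝ) : exp |t| ≤ 2 * cosh t := by
  rw [← cosh_abs, cosh_eq]
  linarith [exp_pos (-|t|)]

theorem lintegral_exp_abs_le_of_even_moments {α : Type*} [MeasurableSpace α] {μ : Measure α}
    {Y : α → ℝ} (hY : Measurable Y) {γ : ℝ} (hγ₀ : 0 ≤ γ) (hγ₁ : γ < 1)
    (hmom : ∀ m : ℕ,
      ∫⁻ x, ENNReal.ofReal (Y x ^ (2 * m) / (2 * m).factorial) ∂μ ≤ ENNReal.ofReal (γ ^ m)) :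
    ∫⁻ x, ENNReal.ofReal (exp |Y x|) ∂μ ≤ ENNReal.ofReal (2 / (1 - γ)) := by
  have hterm : ∀ (t : ℝ) (m : ℕ), 0 ≤ t ^ (2 * m) / (2 * m).factorial := fun t m => by
    rw [pow_mul]; positivity
  calc ∫⁻ x, ENNReal.ofReal (exp |Y x|) ∂μ
      ≤ ∫⁻ x, 2 * ∑' m : ℕ, ENNReal.ofReal (Y x ^ (2 * m) / (2 * m).factorial) ∂μ := by
        refine lintegral_mono fun x => ?_
        rw [← ENNReal.ofReal_tsum_of_nonneg (hterm _) (hasSum_cosh _).summable, ← cosh_eq_tsum,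
          ← ENNReal.ofReal_ofNat 2, ← ENNReal.ofReal_mul zero_le_two]
        exact ENNReal.ofReal_le_ofReal (exp_abs_le_two_mul_cosh _)
    _ = 2 * ∑' m : ℕ, ∫⁻ x, ENNReal.ofReal (Y x ^ (2 * m) / (2 * m).factorial) ∂μ := by
        rw [lintegral_const_mul' _ _ ENNReal.ofNat_ne_top,
          lintegral_tsum fun m => ((hY.pow_const _).div_const _).ennreal_ofReal.aemeasurable]
    _ ≤ 2 * ∑' m : ℕ, ENNReal.ofReal (γ ^ m) := by gcongr with m; exact hmom m
    _ = ENNReal.ofReal (2 / (1 - γ)) := by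
        rw [← ENNReal.ofReal_tsum_of_nonneg (fun m => by positivity)
            (summable_geometric_of_lt_one hγ₀ hγ₁), tsum_geometric_of_lt_one hγ₀ hγ₁,
          ← ENNReal.ofReal_ofNat 2, ← ENNReal.ofReal_mul zero_le_two, div_eq_mul_inv]

section Words

variable {ι E : Type*} {p : ℕ}

/-- `pairSum φ x` is `N² ⟨φ, μ_N ⊗ μ_N⟩` for the empirical measure `μ_N` of `x`. -/
def pairSum [Fintype ι] (φ : E → E → ℝ) (x : ι → E) : ℝ :=
  ∑ i, ∑ j, φ (x i) (x j)

/- A word `w` indexes one term of the expansion of `pairSum φ x ^ p`, and `wordCount w k` is the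
number of the `2p` slots of `w` occupied by the index `k`. -/
def wordProd (φ : E → E → ℝ) (w : Fin p → ι × ι) (x : ι → E) : ℝ :=
  ∏ a, φ (x (w a).1) (x (w a).2)

def wordCount [DecidableEq ι] (w : Fin p → ι × ι) (k : ι) : ℕ :=
  #{a | (w a).1 = k} + #{a | (w a).2 = k}

theorem pairSum_pow [Fintype ι] (φ : E → E → ℝ) (x : ι → E) (p : ℕ) :
    pairSum φ x ^ p = ∑ w : Fin p → ι × ι, wordProd φ w x := by
  rw [pairSum, ← Fintype.sum_prod_type', sum_pow', Fintype.piFinset_univ]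
  rfl

theorem measurable_apply_apply [MeasurableSpace E] {φ : E → E → ℝ}
    (hφ : Measurable (Function.uncurry φ)) (i j : ι) :
    Measurable fun x : ι → E => φ (x i) (x j) :=
  hφ.comp (f := fun x : ι → E => (x i, x j))
    ((measurable_pi_apply i).prodMk (measurable_pi_apply j))

theorem measurable_pairSum [Fintype ι] [MeasurableSpace E] {φ : E → E → ℝ}
    (hφ : Measurable (Function.uncurry φ)) : Measurable (pairSum (ι := ι) φ) :=
  Finset.measurable_sum _ fun i _ => Finset.measurable_sum _ fun j _ =>
    measurable_apply_apply hφ i j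

theorem abs_wordProd_le {φ : E → E → ℝ} {C : ℝ} (hC : ∀ x y, |φ x y| ≤ C)
    (w : Fin p → ι × ι) (x : ι → E) : |wordProd φ w x| ≤ C ^ p := by
  rw [wordProd, abs_prod]
  refine (prod_le_prod (fun a _ => abs_nonneg _) fun a _ => hC _ _).trans ?_
  rw [prod_const, card_univ, Fintype.card_fin]

theorem integrable_wordProd [MeasurableSpace E] {μ : Measure (ι → E)} [IsFiniteMeasure μ]
    {φ : E → E → ℝ} (hφ : Measurable (Function.uncurry φ)) {C : ℝ} (hC : ∀ x y, |φ x y| ≤ C)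
    (w : Fin p → ι × ι) : Integrable (wordProd φ w) μ :=
  .of_bound (Finset.measurable_prod _ fun _ _ => measurable_apply_apply hφ _ _).aestronglyMeasurable
    (C ^ p) (.of_forall fun x => abs_wordProd_le hC w x)

theorem integrable_pairSum_pow [Fintype ι] [MeasurableSpace E] {μ : Measure (ι → E)}
    [IsFiniteMeasure μ] {φ : E → E → ℝ} (hφ : Measurable (Function.uncurry φ)) {C : ℝ}
    (hC : ∀ x y, |φ x y| ≤ C) (p : ℕ) :
    Integrable (fun x => pairSum φ x ^ p) μ := by
  simp_rw [pairSum_pow]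
  exact integrable_finsetSum _ fun w _ => integrable_wordProd hφ hC w

theorem integral_wordProd_eq_zero_of_fst [Fintype ι] [DecidableEq ι] [MeasurableSpace E]
    (ρ : Measure E) [IsProbabilityMeasure ρ] {φ : E → E → ℝ} (hcancel : ∀ y, ∫ x, φ x y ∂ρ = 0)
    {w : Fin p → ι × ι} (hint : Integrable (wordProd φ w) (Measure.pi fun _ => ρ)) {k : ι}
    (hfst : #{a | (w a).1 = k} = 1) (hsnd : #{a | (w a).2 = k} = 0) :
    ∫ x, wordProd φ w x ∂Measure.pi (fun _ => ρ) = 0 := by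
  obtain ⟨a₀, ha₀⟩ := card_eq_one.1 hfst
  have hfst' : ∀ a, (w a).1 = k ↔ a = a₀ := fun a => by
    simpa using congrArg (a ∈ ·) ha₀
  have hsnd' : ∀ a, (w a).2 ≠ k := fun a h => by
    simpa [h] using filter_eq_empty_iff.1 (card_eq_zero.1 hsnd) (mem_univ a)
  have hsplit : ∀ z y, wordProd φ w (Function.update z k y)
      = φ y (z (w a₀).2) * ∏ a ∈ univ.erase a₀, φ (z (w a).1) (z (w a).2) := fun z y => by
    rw [wordProd, ← mul_prod_erase univ _ (mem_univ a₀)]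
    congr 1
    · rw [(hfst' a₀).2 rfl, Function.update_self, Function.update_of_ne (hsnd' a₀)]
    · refine prod_congr rfl fun a ha => ?_
      rw [Function.update_of_ne (mt (hfst' a).1 (ne_of_mem_erase ha)),
        Function.update_of_ne (hsnd' a)]
  rw [integral_pi_eq_integral_integral_update _ k hint]
  simp_rw [hsplit, integral_mul_const, hcancel, zero_mul, integral_zero]

theorem integral_wordProd_eq_zero [Fintype ι] [DecidableEq ι] [MeasurableSpace E]
    (ρ : Measure E) [IsProbabilityMeasure ρ] {φ : E → E → ℝ}
    (hφ : Measurable (Function.uncurry φ)) {C : ℝ} (hC : ∀ x y, |φ x y| ≤ C)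
    (hc₁ : ∀ y, ∫ x, φ x y ∂ρ = 0) (hc₂ : ∀ x, ∫ y, φ x y ∂ρ = 0)
    {w : Fin p → ι × ι} {k : ι} (hk : wordCount w k = 1) :
    ∫ x, wordProd φ w x ∂Measure.pi (fun _ => ρ) = 0 := by
  rcases Nat.add_eq_one_iff.1 hk with ⟨h₁, h₂⟩ | ⟨h₁, h₂⟩
  · -- swapping the two arguments of `φ` and of every letter turns this into the second case
    exact integral_wordProd_eq_zero_of_fst (φ := flip φ) (w := Prod.swap ∘ w) ρ hc₂
      (integrable_wordProd (φ := flip φ) (hφ.comp measurable_swap) (fun x y => hC y x) _) h₂ h₁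
  · exact integral_wordProd_eq_zero_of_fst ρ hc₁ (integrable_wordProd hφ hC w) h₁ h₂

theorem wordCount_fst_ne_zero [DecidableEq ι] (w : Fin p → ι × ι) (a : Fin p) :
    wordCount w (w a).1 ≠ 0 := by
  have : 0 < #{b | (w b).1 = (w a).1} := card_pos.2 ⟨a, by simp⟩
  unfold wordCount; omega

theorem wordCount_snd_ne_zero [DecidableEq ι] (w : Fin p → ι × ι) (a : Fin p) :
    wordCount w (w a).2 ≠ 0 := by
  have : 0 < #{b | (w b).2 = (w a).2} := card_pos.2 ⟨a, by simp⟩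
  unfold wordCount; omega

theorem sum_wordCount [Fintype ι] [DecidableEq ι] (w : Fin p → ι × ι) :
    ∑ k, wordCount w k = 2 * p := by
  have h₁ := card_eq_sum_card_fiberwise (f := fun a => (w a).1) (s := univ) (t := univ) (by simp)
  have h₂ := card_eq_sum_card_fiberwise (f := fun a => (w a).2) (s := univ) (t := univ) (by simp)
  simp only [card_univ, Fintype.card_fin] at h₁ h₂
  simp only [wordCount, sum_add_distrib]
  omega

theorem card_wordCount_ne_zero_le [Fintype ι] [DecidableEq ι] {w : Fin p → ι × ι}
    (hw : ∀ k, wordCount w k ≠ 1) : #{k | wordCount w k ≠ 0} ≤ p := by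
  have : 2 * #{k | wordCount w k ≠ 0} ≤ 2 * p :=
    calc 2 * #{k | wordCount w k ≠ 0} = ∑ k with wordCount w k ≠ 0, 2 := by
          rw [sum_const, smul_eq_mul, mul_comm]
      _ ≤ ∑ k with wordCount w k ≠ 0, wordCount w k :=
          sum_le_sum fun k hk => by have := hw k; have := (mem_filter.1 hk).2; omega
      _ = 2 * p := by rw [sum_filter_ne_zero, sum_wordCount]
  omega

theorem factorial_mul_card_words_le [Fintype ι] [DecidableEq ι] (p : ℕ) :
    p.factorial * #{w : Fin p → ι × ι | #{k | wordCount w k ≠ 0} ≤ p}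
      ≤ Fintype.card ι ^ p * p ^ (2 * p) := by
  set n := Fintype.card ι
  by_cases hp : p ≤ n
  · -- a word using at most `p` indices has all its letters in `V ×ˢ V` for some `p`-subset `V`
    have hsub : ({w : Fin p → ι × ι | #{k | wordCount w k ≠ 0} ≤ p} : Finset _)
        ⊆ (powersetCard p univ).biUnion fun V => Fintype.piFinset fun _ => V ×ˢ V := by
      intro w hw
      obtain ⟨V, hsV, -, hV⟩ :=
        exists_subsuperset_card_eq (subset_univ _) (mem_filter.1 hw).2 (by simpa using hp)
      refine mem_biUnion.2 ⟨V, mem_powersetCard.2 ⟨subset_univ _, hV⟩, ?_⟩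
      refine Fintype.mem_piFinset.2 fun a => mem_product.2 ⟨hsV ?_, hsV ?_⟩
      · simpa using wordCount_fst_ne_zero w a
      · simpa using wordCount_snd_ne_zero w a
    calc p.factorial * #{w : Fin p → ι × ι | #{k | wordCount w k ≠ 0} ≤ p}
        ≤ p.factorial * (n.choose p * (p * p) ^ p) := by
          refine Nat.mul_le_mul_left _ ((card_le_card hsub).trans (card_biUnion_le.trans ?_))
          rw [sum_congr rfl fun V hV => by
            rw [Fintype.card_piFinset, prod_const, card_product, (mem_powersetCard.1 hV).2,
              card_univ, Fintype.card_fin], sum_const, card_powersetCard, card_univ, smul_eq_mul]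
      _ = n.descFactorial p * p ^ (2 * p) := by
          rw [Nat.descFactorial_eq_factorial_mul_choose, mul_assoc, ← sq, ← pow_mul]
      _ ≤ n ^ p * p ^ (2 * p) := Nat.mul_le_mul_right _ (Nat.descFactorial_le_pow n p)
  · calc p.factorial * #{w : Fin p → ι × ι | #{k | wordCount w k ≠ 0} ≤ p}
        ≤ p ^ p * (n ^ p * n ^ p) := by
          refine Nat.mul_le_mul (Nat.factorial_le_pow p) ((card_filter_le _ _).trans_eq ?_)
          rw [card_univ, Fintype.card_fun, Fintype.card_prod, Fintype.card_fin, mul_pow]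
      _ ≤ p ^ p * (n ^ p * p ^ p) :=
          Nat.mul_le_mul_left _ (Nat.mul_le_mul_left _ (Nat.pow_le_pow_left (by omega) p))
      _ = n ^ p * p ^ (2 * p) := by ring

theorem integral_pairSum_pow_le [Fintype ι] [DecidableEq ι] [MeasurableSpace E]
    (ρ : Measure E) [IsProbabilityMeasure ρ] {φ : E → E → ℝ}
    (hφ : Measurable (Function.uncurry φ)) {C : ℝ} (hC : ∀ x y, |φ x y| ≤ C)
    (hc₁ : ∀ y, ∫ x, φ x y ∂ρ = 0) (hc₂ : ∀ x, ∫ y, φ x y ∂ρ = 0) (p : ℕ) :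
    ∫ x, pairSum φ x ^ p ∂Measure.pi (fun _ : ι => ρ)
      ≤ Fintype.card ι ^ p * p ^ (2 * p) / p.factorial * C ^ p := by
  set A : Finset (Fin p → ι × ι) := {w | #{k | wordCount w k ≠ 0} ≤ p}
  have hvanish : ∀ w ∉ A, ∫ x, wordProd φ w x ∂Measure.pi (fun _ : ι => ρ) = 0 := by
    intro w hw
    obtain ⟨k, hk⟩ : ∃ k, wordCount w k = 1 := by
      by_contra! h
      exact hw (mem_filter.2 ⟨mem_univ _, card_wordCount_ne_zero_le h⟩)
    exact integral_wordProd_eq_zero ρ hφ hC hc₁ hc₂ hk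
  have hC₀ : 0 ≤ C := by
    obtain ⟨x⟩ := nonempty_of_isProbabilityMeasure ρ
    exact (abs_nonneg _).trans (hC x x)
  have hA : (#A : ℝ) ≤ Fintype.card ι ^ p * p ^ (2 * p) / p.factorial := by
    rw [le_div_iff₀ (by positivity), mul_comm]
    exact_mod_cast factorial_mul_card_words_le p
  calc ∫ x, pairSum φ x ^ p ∂Measure.pi (fun _ : ι => ρ)
      = ∑ w, ∫ x, wordProd φ w x ∂Measure.pi (fun _ : ι => ρ) := by
        simp_rw [pairSum_pow]
        exact integral_finsetSum _ fun w _ => integrable_wordProd hφ hC w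
    _ = ∑ w ∈ A, ∫ x, wordProd φ w x ∂Measure.pi (fun _ : ι => ρ) :=
        (sum_subset (subset_univ _) fun w _ hw => hvanish w hw).symm
    _ ≤ ∑ w ∈ A, C ^ p := sum_le_sum fun w _ => by
        refine (integral_mono (integrable_wordProd hφ hC w) (integrable_const _)
          fun x => (le_abs_self _).trans (abs_wordProd_le hC w x)).trans ?_
        simp
    _ ≤ Fintype.card ι ^ p * p ^ (2 * p) / p.factorial * C ^ p := by
        rw [sum_const, nsmul_eq_mul]
        exact mul_le_mul_of_nonneg_right hA (by positivity)

theorem lintegral_pairSum_div_pow_div_factorial_le [Fintype ι] [DecidableEq ι]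
    [MeasurableSpace E] (ρ : Measure E) [IsProbabilityMeasure ρ] {φ : E → E → ℝ}
    (hφ : Measurable (Function.uncurry φ)) {C : ℝ} (hC : ∀ x y, |φ x y| ≤ C)
    (hc₁ : ∀ y, ∫ x, φ x y ∂ρ = 0) (hc₂ : ∀ x, ∫ y, φ x y ∂ρ = 0) (hι : 0 < Fintype.card ι)
    (m : ℕ) :
    ∫⁻ x, ENNReal.ofReal ((pairSum φ x / Fintype.card ι) ^ (2 * m) / (2 * m).factorial)
        ∂Measure.pi (fun _ : ι => ρ)
      ≤ ENNReal.ofReal ((exp 4 * C ^ 2) ^ m) := by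
  set n : ℝ := (Fintype.card ι : ℝ)
  set q := 2 * m
  have hint := integrable_pairSum_pow (μ := Measure.pi fun _ : ι => ρ) hφ hC q
  simp_rw [div_pow, div_div]
  rw [← ofReal_integral_eq_lintegral_ofReal (hint.div_const _)
    (.of_forall fun x => by simp only [Pi.zero_apply, q, pow_mul]; positivity)]
  refine ENNReal.ofReal_le_ofReal ?_
  have hn : 0 < n := Nat.cast_pos.2 hι
  calc ∫ x, pairSum φ x ^ q / (n ^ q * q.factorial) ∂Measure.pi (fun _ : ι => ρ)
      ≤ n ^ q * q ^ (2 * q) / q.factorial * C ^ q / (n ^ q * q.factorial) := by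
        rw [integral_div]
        gcongr
        exact integral_pairSum_pow_le ρ hφ hC hc₁ hc₂ q
    _ = ((q : ℝ) ^ q / q.factorial) ^ 2 * C ^ q := by
        field_simp
        ring
    _ ≤ exp q ^ 2 * C ^ q := by
        have : 0 ≤ C ^ q := by rw [pow_mul]; positivity
        gcongr
        exact pow_div_factorial_le_exp _ q.cast_nonneg q
    _ = (exp 4 * C ^ 2) ^ m := by
        rw [mul_pow, ← exp_nat_mul, ← pow_mul, ← exp_nat_mul, pow_mul]
        push_cast [q]
        ring_nf

end Words

/-- Exponential law of large numbers (Jabin–Wang): there is a universal constant `C̃`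
such that for any probability measure `ρ̄` on `ℝ^d`, any bounded `φ` with
`γ := C̃ ‖φ‖_∞² < 1` satisfying the two cancellations
`∫ φ(x,y) ρ̄(dx) = 0` and `∫ φ(x,y) ρ̄(dy) = 0`, one has for all `N > 2`
`∫ exp(N |⟨φ, μ_N ⊗ μ_N⟩|) dρ̄^{⊗N} ≤ 2/(1 − γ)`. -/
theorem stmt1 :
    ∃ Ctilde : ℝ, 0 < Ctilde ∧
      ∀ (d : ℕ) (ρ : Measure (Fin d → ℝ)), IsProbabilityMeasure ρ →
      ∀ (φ : (Fin d → ℝ) → (Fin d → ℝ) → ℝ), Measurable (Function.uncurry φ) →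
      ∀ Cφ : ℝ, (∀ x y, |φ x y| ≤ Cφ) →
      (∀ y, ∫ x, φ x y ∂ρ = 0) → (∀ x, ∫ y, φ x y ∂ρ = 0) →
      Ctilde * Cφ ^ 2 < 1 →
      ∀ N : ℕ, 2 < N →
        ∫⁻ x : Fin N → (Fin d → ℝ),
            ENNReal.ofReal
              (Real.exp ((N : ℝ) *
                |(1 / (N : ℝ) ^ 2) * ∑ i : Fin N, ∑ j : Fin N, φ (x i) (x j)|))
          ∂(Measure.pi fun _ : Fin N => ρ)
        ≤ ENNReal.ofReal (2 / (1 - Ctilde * Cφ ^ 2)) := by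
  refine ⟨exp 4, exp_pos 4, fun d ρ _ φ hφ Cφ hC hc₁ hc₂ hγ N hN => ?_⟩
  have hN₀ : (0 : ℝ) < N := by positivity
  have hrescale : ∀ x : Fin N → (Fin d → ℝ),
      (N : ℝ) * |1 / (N : ℝ) ^ 2 * ∑ i, ∑ j, φ (x i) (x j)|
        = |pairSum φ x / Fintype.card (Fin N)| := fun x => by
    rw [pairSum, Fintype.card_fin, abs_mul, abs_of_pos (by positivity : (0 : ℝ) < 1 / (N : ℝ) ^ 2),
      abs_div, abs_of_pos hN₀]
    field_simp
  simp_rw [hrescale]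
  exact lintegral_exp_abs_le_of_even_moments ((measurable_pairSum hφ).div_const _)
    (by positivity) hγ
    (lintegral_pairSum_div_pow_div_factorial_le ρ hφ hC hc₁ hc₂ (by simp; omega))
end

section
/- Let ρ̄ be a probability measure on ℝ^d and φ ∈ L^∞(ℝ^d × ℝ^d) with ∫∫ ρ̄(dx) ρ̄(dy) φ(x,y) = 0 and ‖φ‖_{L^∞} small enough so that α₀ := e^9 ‖φ‖²_{L^∞} < 1 and β₀ := 4e ‖φ‖²_{L^∞} < 1. Then for all N ≥ 2, ∫_{ℝ^{dN}} exp( N | ⟨φ, μ_N ⊗ μ_N⟩ |² ) ρ̄^{⊗N}(dx) ≤ 1 + α₀/(1−α₀) + β₀/(1−β₀). -/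
/-!
Expand the exponential: the `k`-th term is `∫ S^{2k} / (N^{3k} k!)` with `S = ∑ᵢ ∑ⱼ φ(xᵢ, xⱼ)`.
Multiplied out, `S^{2k}` is a sum over directed multigraphs with `2k` edges on the `N` particles.
A multigraph with an isolated edge `(a, b)`, `a ≠ b`, contributes nothing: `x_a` and `x_b` occur in
no other factor, so integrating them out first produces `∫∫ φ dρ̄ dρ̄ = 0`. In the remaining
multigraphs every edge has at most one end of degree one, so at most `3k` particles occur. Coding
the `4k` edge ends by the value at one chosen point of each fibre and by a pointer to that point
elsewhere, there are at most `k^k N^{3k} 625^k` of them. Since `k^k ≤ e^k k!` and `625 e ≤ e⁹`, the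
terms with `k ≤ N` are at most `α₀^k`; for `k > N` the bound `|⟨φ, μ_N ⊗ μ_N⟩| ≤ ‖φ‖_∞` gives `β₀^k`.
-/

open MeasureTheory Real Finset Function

section FiberCode
variable {S V : Type*}

noncomputable def fiberRep (v : S → V) (s : S) : S := (⟨s, rfl⟩ : ∃ t, v t = v s).choose

lemma apply_fiberRep (v : S → V) (s : S) : v (fiberRep v s) = v s :=
  (⟨s, rfl⟩ : ∃ t, v t = v s).choose_spec

lemma fiberRep_eq_of_apply_eq {v : S → V} {s t : S} (h : v s = v t) :
    fiberRep v s = fiberRep v t := by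
  unfold fiberRep
  generalize_proofs hs ht
  congr 2
  exact funext fun u => by rw [h]

lemma fiberRep_fiberRep (v : S → V) (s : S) : fiberRep v (fiberRep v s) = fiberRep v s :=
  fiberRep_eq_of_apply_eq (apply_fiberRep v s)

variable [DecidableEq S]

noncomputable def fiberCode (v : S → V) (s : S) : V ⊕ S :=
  if fiberRep v s = s then .inl (v s) else .inr (fiberRep v s)

lemma fiberCode_injective : Function.Injective (fiberCode : (S → V) → S → V ⊕ S) := by
  intro v w h
  have hrep : ∀ s, fiberRep v s = s → v s = w s := fun s hs => by
    have hs' := congrFun h s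
    simp only [fiberCode, hs, if_true] at hs'
    split_ifs at hs'
    simpa using hs'
  funext s
  by_cases hs : fiberRep v s = s
  · exact hrep s hs
  · have hs' := congrFun h s
    simp only [fiberCode, hs, if_false] at hs'
    split_ifs at hs'
    simp only [Sum.inr.injEq] at hs'
    rw [← apply_fiberRep v s, ← apply_fiberRep w s, ← hs', hrep _ (fiberRep_fiberRep v s)]

variable [Fintype S] [DecidableEq V]

lemma card_filter_fiberRep_eq (v : S → V) :
    #{s | fiberRep v s = s} = #(univ.image v) := by
  have himage : ({s | fiberRep v s = s} : Finset S).image v = univ.image v := by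
    refine (image_subset_image (subset_univ _)).antisymm fun y hy => ?_
    obtain ⟨s, -, rfl⟩ := mem_image.mp hy
    exact mem_image.mpr ⟨fiberRep v s, by simp [fiberRep_fiberRep], apply_fiberRep v s⟩
  rw [← himage, card_image_of_injOn]
  intro s hs t ht hst
  simp only [coe_filter, mem_univ, true_and, Set.mem_ofPred_eq] at hs ht
  rw [← hs, ← ht, fiberRep_eq_of_apply_eq hst]

lemma card_le_sum_of_card_image_add_le [Fintype V] (F : Finset (S → V)) (r : ℕ)
    (hF : ∀ v ∈ F, #(univ.image v) + r ≤ Fintype.card S) :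
    #F ≤ ∑ A : Finset S with r ≤ #A,
      Fintype.card S ^ #A * Fintype.card V ^ (Fintype.card S - #A) := by
  let codes (A : Finset S) : Finset (S → V ⊕ S) :=
    Fintype.piFinset fun s => if s ∈ A then univ.map .inr else univ.map .inl
  have hcodes : F.image fiberCode ⊆ ({A | r ≤ #A} : Finset (Finset S)).biUnion codes := by
    intro c hc
    obtain ⟨v, hv, rfl⟩ := mem_image.mp hc
    refine mem_biUnion.mpr ⟨({s | ¬fiberRep v s = s} : Finset S), ?_, ?_⟩
    · have h₁ := card_filter_fiberRep_eq v
      have h₂ := card_filter_add_card_filter_not (s := univ) (fun s => fiberRep v s = s)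
      have h₃ := hF v hv
      rw [card_univ] at h₂
      simp only [mem_filter, mem_univ, true_and]
      omega
    · refine Fintype.mem_piFinset.mpr fun s => ?_
      by_cases hs : fiberRep v s = s <;> simp [fiberCode, hs]
  calc #F = #(F.image fiberCode) := (card_image_of_injective F fiberCode_injective).symm
    _ ≤ ∑ A : Finset S with r ≤ #A, #(codes A) :=
      (card_le_card hcodes).trans card_biUnion_le
    _ = _ := by
      refine sum_congr rfl fun A _ => ?_
      simp only [codes, Fintype.card_piFinset, apply_ite card, card_map, card_univ, prod_ite,
        prod_const, filter_mem_eq_inter, univ_inter, filter_not, ← compl_eq_univ_sdiff, card_compl]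

end FiberCode

lemma sum_card_pow_mul_pow_le {S : Type*} [Fintype S] {n : ℕ} {c : ℝ} (hc : 0 < c)
    (hS : (Fintype.card S : ℝ) ≤ c * n) (r : ℕ) :
    ∑ A : Finset S with r ≤ #A, (Fintype.card S : ℝ) ^ #A * (n : ℝ) ^ (Fintype.card S - #A)
      ≤ (Fintype.card S / c) ^ r * (n : ℝ) ^ (Fintype.card S - r) * (1 + c) ^ Fintype.card S := by
  set s := Fintype.card S
  have hterm : ∀ A : Finset S, r ≤ #A →
      (s : ℝ) ^ #A * (n : ℝ) ^ (s - #A) ≤ (s / c) ^ r * (n : ℝ) ^ (s - r) * c ^ #A := by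
    intro A hA
    have hAs : #A ≤ s := card_le_univ A
    calc (s : ℝ) ^ #A * (n : ℝ) ^ (s - #A)
        = (s / c) ^ r * c ^ r * (s : ℝ) ^ (#A - r) * (n : ℝ) ^ (s - #A) := by
          rw [div_pow, div_mul_cancel₀ _ (by positivity), ← pow_add, Nat.add_sub_cancel' hA]
      _ ≤ (s / c) ^ r * c ^ r * (c * n) ^ (#A - r) * (n : ℝ) ^ (s - #A) := by
          gcongr
      _ = (s / c) ^ r * (n : ℝ) ^ (s - r) * c ^ #A := by
          have hc : c ^ r * c ^ (#A - r) = c ^ #A := by rw [← pow_add, Nat.add_sub_cancel' hA]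
          have hn : (n : ℝ) ^ (#A - r) * (n : ℝ) ^ (s - #A) = (n : ℝ) ^ (s - r) := by
            rw [← pow_add]; congr 1; omega
          rw [← hc, ← hn]
          ring
  calc ∑ A : Finset S with r ≤ #A, (s : ℝ) ^ #A * (n : ℝ) ^ (s - #A)
      ≤ ∑ A : Finset S with r ≤ #A, (s / c) ^ r * (n : ℝ) ^ (s - r) * c ^ #A :=
        sum_le_sum fun A hA => hterm A (mem_filter.mp hA).2
    _ ≤ ∑ A : Finset S, (s / c) ^ r * (n : ℝ) ^ (s - r) * c ^ #A :=
        sum_le_sum_of_subset_of_nonneg (filter_subset _ _) fun _ _ _ => by positivity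
    _ = (s / c) ^ r * (n : ℝ) ^ (s - r) * (1 + c) ^ s := by
        have := sum_pow_mul_eq_add_pow c 1 (univ : Finset S)
        simp only [one_pow, mul_one, powerset_univ, card_univ] at this
        rw [← mul_sum, this, add_comm]

section Multigraph
variable {S E V : Type*}

def IsLone (g : S → V) (s : S) : Prop := ∀ t, g t = g s → t = s

instance [Fintype S] [DecidableEq S] [DecidableEq V] (g : S → V) : DecidablePred (IsLone g) :=
  fun _ => Fintype.decidableForallFintype

lemma two_mul_card_image_le [Fintype S] [DecidableEq S] [DecidableEq V] (g : S → V) :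
    2 * #(univ.image g) ≤ Fintype.card S + #{s | IsLone g s} := by
  have hmaps : Set.MapsTo g (univ : Finset S) (univ.image g) := fun s _ => by simp
  rw [← card_univ, card_eq_sum_card_fiberwise hmaps,
    card_eq_sum_card_fiberwise (hmaps.mono_left (by simp)), ← sum_add_distrib, mul_comm,
    ← smul_eq_mul, ← sum_const]
  refine sum_le_sum fun y hy => ?_
  obtain ⟨s, -, rfl⟩ := mem_image.mp hy
  by_cases hs : IsLone g s
  · have h₁ : 0 < #{t | g t = g s} := card_pos.mpr ⟨s, by simp⟩
    have h₂ : 0 < #{t ∈ ({t | IsLone g t} : Finset S) | g t = g s} := card_pos.mpr ⟨s, by simp [hs]⟩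
    omega
  · obtain ⟨t, hts, hne⟩ : ∃ t, g t = g s ∧ t ≠ s := by simpa [IsLone] using hs
    have : 1 < #{t | g t = g s} := one_lt_card.mpr ⟨t, by simp [hts], s, by simp, hne⟩
    omega

-- `f : E → V × V` is a directed multigraph on `V` with edge set `E`.
def endpoints (f : E → V × V) : E ⊕ E → V := Sum.elim (fun e => (f e).1) (fun e => (f e).2)

lemma endpoints_injective : Function.Injective (endpoints : (E → V × V) → E ⊕ E → V) :=
  fun _ _ h => funext fun e => Prod.ext (congrFun h (.inl e)) (congrFun h (.inr e))

def HasIsolatedEdge (f : E → V × V) : Prop :=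
  ∃ e, IsLone (endpoints f) (.inl e) ∧ IsLone (endpoints f) (.inr e)

instance [Fintype E] [DecidableEq E] [DecidableEq V] :
    DecidablePred (HasIsolatedEdge (E := E) (V := V)) :=
  fun _ => Fintype.decidableExistsFintype

variable [Fintype E] [DecidableEq E] [DecidableEq V]

lemma card_isLone_endpoints_le {f : E → V × V} (hf : ¬HasIsolatedEdge f) :
    #{s | IsLone (endpoints f) s} ≤ Fintype.card E := by
  refine card_le_card_of_injOn (Sum.elim id id) (fun _ _ => mem_coe.mpr (mem_univ _)) ?_
  rintro (e | e) hs (e' | e') ht h <;> simp only [Sum.elim_inl, Sum.elim_inr, id] at h <;> subst h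
  · rfl
  · exact absurd ⟨(by simpa using hs), (by simpa using ht)⟩ (not_exists.mp hf e)
  · exact absurd ⟨(by simpa using ht), (by simpa using hs)⟩ (not_exists.mp hf e)
  · rfl

lemma two_mul_card_image_endpoints_le {f : E → V × V} (hf : ¬HasIsolatedEdge f) :
    2 * #(univ.image (endpoints f)) ≤ 3 * Fintype.card E := by
  have := two_mul_card_image_le (endpoints f)
  have := card_isLone_endpoints_le hf
  rw [Fintype.card_sum] at *
  omega


lemma card_not_hasIsolatedEdge_le [Fintype V] (k : ℕ) (hE : Fintype.card E = 2 * k)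
    (hk : k ≤ Fintype.card V) :
    (#{f : E → V × V | ¬HasIsolatedEdge f} : ℝ)
      ≤ (k : ℝ) ^ k * (Fintype.card V : ℝ) ^ (3 * k) * 625 ^ k := by
  have hslots : Fintype.card (E ⊕ E) = 4 * k := by rw [Fintype.card_sum, hE]; ring
  have hcount := card_le_sum_of_card_image_add_le
    (({f | ¬HasIsolatedEdge f} : Finset (E → V × V)).image endpoints) k fun g hg => by
      obtain ⟨f, hf, rfl⟩ := mem_image.mp hg
      have := two_mul_card_image_endpoints_le (mem_filter.mp hf).2
      omega
  rw [card_image_of_injective _ endpoints_injective] at hcount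
  calc (#{f : E → V × V | ¬HasIsolatedEdge f} : ℝ)
      ≤ ∑ A : Finset (E ⊕ E) with k ≤ #A, (Fintype.card (E ⊕ E) : ℝ) ^ #A
          * (Fintype.card V : ℝ) ^ (Fintype.card (E ⊕ E) - #A) := by exact_mod_cast hcount
    _ ≤ (Fintype.card (E ⊕ E) / 4) ^ k * (Fintype.card V : ℝ) ^ (Fintype.card (E ⊕ E) - k)
          * (1 + 4) ^ Fintype.card (E ⊕ E) :=
        sum_card_pow_mul_pow_le (by norm_num) (by rw [hslots]; push_cast; gcongr) k
    _ = (k : ℝ) ^ k * (Fintype.card V : ℝ) ^ (3 * k) * 625 ^ k := by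
        rw [hslots, show 4 * k - k = 3 * k by omega,
          show (1 + 4 : ℝ) ^ (4 * k) = 625 ^ k by rw [pow_mul]; norm_num]
        push_cast
        ring

end Multigraph

section Pi
variable {ι α : Type*} [DecidableEq ι]

lemma preimage_update_update_pi {a b : ι} (hab : a ≠ b) (s : ι → Set α) :
    (fun q : (α × α) × (ι → α) => update (update q.2 b q.1.2) a q.1.1) ⁻¹' Set.univ.pi s
      = (s a ×ˢ s b) ×ˢ Set.univ.pi (update (update s b Set.univ) a Set.univ) := by
  ext ⟨⟨u, v⟩, z⟩
  simp only [Set.mem_preimage, Set.mem_pi, Set.mem_univ, true_implies, Set.mem_prod]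
  constructor
  · intro h
    refine ⟨⟨by simpa using h a, by simpa [hab.symm] using h b⟩, fun i => ?_⟩
    rcases eq_or_ne i a with rfl | ha
    · simp
    rcases eq_or_ne i b with rfl | hb
    · simp [ha]
    simpa [ha, hb] using h i
  · rintro ⟨⟨hu, hv⟩, hz⟩ i
    rcases eq_or_ne i a with rfl | ha
    · simpa
    rcases eq_or_ne i b with rfl | hb
    · simpa [ha]
    simpa [ha, hb] using hz i

variable [Fintype ι] [MeasurableSpace α] (ρ : Measure α) [IsProbabilityMeasure ρ]

lemma measurePreserving_update_update {a b : ι} (hab : a ≠ b) :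
    MeasurePreserving (fun q : (α × α) × (ι → α) => update (update q.2 b q.1.2) a q.1.1)
      ((ρ.prod ρ).prod (Measure.pi fun _ => ρ)) (Measure.pi fun _ => ρ) := by
  refine ⟨by fun_prop, (Measure.pi_eq fun s hs => ?_).symm⟩
  rw [Measure.map_apply (by fun_prop) (MeasurableSet.univ_pi hs), preimage_update_update_pi hab,
    Measure.prod_prod, Measure.prod_prod, Measure.pi_pi]
  have hprod (g : ι → ENNReal) : ∏ i, g i = g a * g b * ∏ i ∈ (univ.erase a).erase b, g i := by
    rw [mul_assoc, ← mul_prod_erase univ g (mem_univ a),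
      ← mul_prod_erase (univ.erase a) g (mem_erase.mpr ⟨hab.symm, mem_univ b⟩)]
  rw [hprod, hprod]
  simp only [update_self, update_of_ne hab.symm, measure_univ, one_mul]
  refine congrArg (ρ (s a) * ρ (s b) * ·) (prod_congr rfl fun i hi => ?_)
  obtain ⟨hib, hia⟩ : i ≠ b ∧ i ≠ a := by simpa using hi
  rw [update_of_ne hia, update_of_ne hib]

lemma integral_mul_eq_mul_integral_of_indep_coords {ψ : α → α → ℝ} (hψ : Measurable (uncurry ψ))
    {h : (ι → α) → ℝ} (hh : Measurable h) {a b : ι} (hab : a ≠ b)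
    (hdep : ∀ x y, (∀ i, i ≠ a → i ≠ b → x i = y i) → h x = h y) :
    ∫ x, ψ (x a) (x b) * h x ∂(Measure.pi fun _ => ρ)
      = (∫ z, uncurry ψ z ∂(ρ.prod ρ)) * ∫ x, h x ∂(Measure.pi fun _ => ρ) := by
  have hmp := measurePreserving_update_update ρ hab
  conv_lhs => rw [← hmp.map_eq, integral_map hmp.measurable.aemeasurable (by fun_prop)]
  rw [← integral_prod_mul]
  refine integral_congr_ae (ae_of_all _ fun q => ?_)
  simp only [update_self, update_of_ne hab.symm]
  congr 1
  exact hdep _ _ fun i hia hib => by simp [update_of_ne hia, update_of_ne hib]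

end Pi

lemma abs_prod_le_pow {ι α E : Type*} [Fintype E] {φ : α → α → ℝ} {C : ℝ}
    (hφb : ∀ x y, |φ x y| ≤ C) (f : E → ι × ι) (x : ι → α) :
    |∏ e, φ (x (f e).1) (x (f e).2)| ≤ C ^ Fintype.card E := by
  rw [abs_prod, ← card_univ, ← prod_const]
  exact prod_le_prod (fun _ _ => abs_nonneg _) fun _ _ => hφb _ _

section Moments
variable {ι α : Type*} [Fintype ι] [DecidableEq ι] [MeasurableSpace α]
  {ρ : Measure α} [IsProbabilityMeasure ρ] {φ : α → α → ℝ} {C : ℝ}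

lemma integral_prod_eq_zero_of_hasIsolatedEdge (hφm : Measurable (uncurry φ))
    (hφb : ∀ x y, |φ x y| ≤ C) (hcanc : ∫ x, ∫ y, φ x y ∂ρ ∂ρ = 0)
    {E : Type*} [Fintype E] [DecidableEq E] {f : E → ι × ι} (hf : HasIsolatedEdge f) :
    ∫ x, ∏ e, φ (x (f e).1) (x (f e).2) ∂(Measure.pi fun _ => ρ) = 0 := by
  obtain ⟨e, hlone₁, hlone₂⟩ := hf
  have hab : (f e).1 ≠ (f e).2 := fun h => Sum.inr_ne_inl (hlone₁ (.inr e) h.symm)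
  have hne₁ : ∀ l ≠ e, (f l).1 ≠ (f e).1 ∧ (f l).1 ≠ (f e).2 := fun l hl =>
    ⟨fun h => hl (Sum.inl_injective (hlone₁ (.inl l) h)),
      fun h => Sum.inl_ne_inr (hlone₂ (.inl l) h)⟩
  have hne₂ : ∀ l ≠ e, (f l).2 ≠ (f e).1 ∧ (f l).2 ≠ (f e).2 := fun l hl =>
    ⟨fun h => Sum.inr_ne_inl (hlone₁ (.inr l) h),
      fun h => hl (Sum.inr_injective (hlone₂ (.inr l) h))⟩
  have hint : Integrable (uncurry φ) (ρ.prod ρ) :=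
    .of_bound hφm.aestronglyMeasurable C (ae_of_all _ fun z => hφb z.1 z.2)
  simp_rw [← mul_prod_erase univ _ (mem_univ e)]
  have hsplit := integral_mul_eq_mul_integral_of_indep_coords ρ hφm
    (h := fun x => ∏ l ∈ univ.erase e, φ (x (f l).1) (x (f l).2)) (by fun_prop) hab
    fun x y hxy => prod_congr rfl fun l hl => by
      have hl := ne_of_mem_erase hl
      rw [hxy _ (hne₁ l hl).1 (hne₁ l hl).2, hxy _ (hne₂ l hl).1 (hne₂ l hl).2]
  rw [hsplit, integral_prod _ hint]
  simp [hcanc]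

lemma integral_sum_sum_pow_le (hφm : Measurable (uncurry φ)) (hφb : ∀ x y, |φ x y| ≤ C)
    (hcanc : ∫ x, ∫ y, φ x y ∂ρ ∂ρ = 0) (M : ℕ) :
    ∫ x : ι → α, (∑ i, ∑ j, φ (x i) (x j)) ^ M ∂(Measure.pi fun _ => ρ)
      ≤ (#{f : Fin M → ι × ι | ¬HasIsolatedEdge f} : ℝ) * C ^ M := by
  have hexpand (x : ι → α) : (∑ i, ∑ j, φ (x i) (x j)) ^ M
      = ∑ f : Fin M → ι × ι, ∏ l, φ (x (f l).1) (x (f l).2) := by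
    rw [← Fintype.sum_prod_type', Fintype.sum_pow]
  have hbound (f : Fin M → ι × ι) (x : ι → α) : ‖∏ l, φ (x (f l).1) (x (f l).2)‖ ≤ C ^ M := by
    rw [Real.norm_eq_abs]
    exact (abs_prod_le_pow hφb f x).trans_eq (by rw [Fintype.card_fin])
  have hint (f : Fin M → ι × ι) :
      Integrable (fun x => ∏ l, φ (x (f l).1) (x (f l).2)) (Measure.pi fun _ => ρ) :=
    .of_bound (Finset.measurable_prod _ fun l _ => by fun_prop).aestronglyMeasurable _
      (ae_of_all _ (hbound f))
  simp_rw [hexpand]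
  rw [integral_finsetSum _ fun f _ => hint f, ← sum_filter_add_sum_filter_not univ HasIsolatedEdge,
    sum_eq_zero fun f hf => integral_prod_eq_zero_of_hasIsolatedEdge hφm hφb hcanc
      (mem_filter.mp hf).2, zero_add, ← nsmul_eq_mul, ← sum_const]
  refine sum_le_sum fun f _ => (le_abs_self _).trans ?_
  simpa using norm_integral_le_of_norm_le_const (μ := Measure.pi fun _ => ρ)
    (ae_of_all _ (hbound f))

lemma integral_sum_sum_pow_two_mul_le (hφm : Measurable (uncurry φ))
    (hφb : ∀ x y, |φ x y| ≤ C) (hcanc : ∫ x, ∫ y, φ x y ∂ρ ∂ρ = 0) {k : ℕ}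
    (hk : k ≤ Fintype.card ι) :
    ∫ x : ι → α, (∑ i, ∑ j, φ (x i) (x j)) ^ (2 * k) ∂(Measure.pi fun _ => ρ)
      ≤ k ^ k * (Fintype.card ι : ℝ) ^ (3 * k) * 625 ^ k * C ^ (2 * k) :=
  (integral_sum_sum_pow_le hφm hφb hcanc (2 * k)).trans <|
    mul_le_mul_of_nonneg_right (card_not_hasIsolatedEdge_le k (Fintype.card_fin _) hk)
      ((even_two_mul k).pow_nonneg C)

end Moments

lemma pow_div_factorial_le_exp_one_pow (k : ℕ) : (k : ℝ) ^ k / k.factorial ≤ exp 1 ^ k := by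
  rw [exp_one_pow]
  exact pow_div_factorial_le_exp _ k.cast_nonneg k

lemma exp_one_mul_625_le_exp_nine : exp 1 * 625 ≤ exp 9 := by
  have h : (625 : ℝ) ≤ exp 1 ^ 8 :=
    (by norm_num : (625 : ℝ) ≤ 2.7182818283 ^ 8).trans
      (pow_le_pow_left₀ (by norm_num) exp_one_gt_d9.le 8)
  calc exp 1 * 625 ≤ exp 1 * exp 1 ^ 8 := by gcongr
    _ = exp 9 := by rw [← pow_succ', exp_one_pow]; norm_num

lemma lintegral_ofReal_exp_eq_tsum {Ω : Type*} [MeasurableSpace Ω] {μ : Measure Ω} {Y : Ω → ℝ}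
    (hY : Measurable Y) (hY₀ : ∀ x, 0 ≤ Y x) :
    ∫⁻ x, ENNReal.ofReal (exp (Y x)) ∂μ
      = ∑' k, ∫⁻ x, ENNReal.ofReal (Y x ^ k / k.factorial) ∂μ := by
  rw [← lintegral_tsum fun k => by fun_prop]
  refine lintegral_congr fun x => ?_
  rw [← ENNReal.ofReal_tsum_of_nonneg (fun k => by have := hY₀ x; positivity)
    (summable_pow_div_factorial _), exp_eq_exp_ℝ, NormedSpace.exp_eq_tsum_div]

lemma tsum_ofReal_pow_succ {r : ℝ} (h₀ : 0 ≤ r) (h₁ : r < 1) :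
    ∑' k, ENNReal.ofReal (r ^ (k + 1)) = ENNReal.ofReal (r / (1 - r)) := by
  have h : HasSum (fun k => r ^ (k + 1)) (r / (1 - r)) := by
    simpa [pow_succ', div_eq_mul_inv] using (hasSum_geometric_of_lt_one h₀ h₁).mul_left r
  rw [← ENNReal.ofReal_tsum_of_nonneg (fun k => by positivity) h.summable, h.tsum_eq]

lemma tsum_le_one_add_geometric {a : ℕ → ENNReal} {r s : ℝ} (hr₀ : 0 ≤ r) (hr₁ : r < 1)
    (hs₀ : 0 ≤ s) (hs₁ : s < 1) (h₀ : a 0 ≤ 1)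
    (h : ∀ k, a (k + 1) ≤ ENNReal.ofReal (r ^ (k + 1)) + ENNReal.ofReal (s ^ (k + 1))) :
    ∑' k, a k ≤ ENNReal.ofReal (1 + r / (1 - r) + s / (1 - s)) := by
  have hr : 0 ≤ r / (1 - r) := div_nonneg hr₀ (by linarith)
  have hs : 0 ≤ s / (1 - s) := div_nonneg hs₀ (by linarith)
  calc ∑' k, a k = a 0 + ∑' k, a (k + 1) := tsum_eq_zero_add' ENNReal.summable
    _ ≤ 1 + ∑' k, (ENNReal.ofReal (r ^ (k + 1)) + ENNReal.ofReal (s ^ (k + 1))) :=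
      add_le_add h₀ (ENNReal.tsum_le_tsum h)
    _ = ENNReal.ofReal (1 + r / (1 - r) + s / (1 - s)) := by
      rw [ENNReal.tsum_add, tsum_ofReal_pow_succ hr₀ hr₁, tsum_ofReal_pow_succ hs₀ hs₁,
        ENNReal.ofReal_add (by positivity) hs, ENNReal.ofReal_add zero_le_one hr,
        ENNReal.ofReal_one, add_assoc]

section EmpiricalPairing
variable {ι α : Type*} [Fintype ι]

-- `⟨φ, μ_N ⊗ μ_N⟩` for the empirical measure `μ_N` of `x`.
noncomputable def empiricalPairing (φ : α → α → ℝ) (x : ι → α) : ℝ :=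
  1 / (Fintype.card ι : ℝ) ^ 2 * ∑ i, ∑ j, φ (x i) (x j)

variable {φ : α → α → ℝ} {C : ℝ}

lemma abs_empiricalPairing_le [Nonempty ι] (hφb : ∀ x y, |φ x y| ≤ C) (x : ι → α) :
    |empiricalPairing φ x| ≤ C := by
  have hn : (0 : ℝ) < Fintype.card ι := by exact_mod_cast Fintype.card_pos
  have hsum : |∑ i, ∑ j, φ (x i) (x j)| ≤ (Fintype.card ι : ℝ) ^ 2 * C :=
    (abs_sum_le_sum_abs _ _).trans <| (sum_le_sum fun i _ => (abs_sum_le_sum_abs _ _).trans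
      (sum_le_sum fun j _ => hφb _ _)).trans_eq (by simp [sq, mul_assoc])
  rw [empiricalPairing, abs_mul, abs_of_pos (by positivity), one_div_mul_eq_div,
    div_le_iff₀ (by positivity)]
  linarith

lemma pow_div_factorial_le_of_card_le [Nonempty ι] (hφb : ∀ x y, |φ x y| ≤ C) {k : ℕ}
    (hk : Fintype.card ι ≤ k) (x : ι → α) :
    ((Fintype.card ι : ℝ) * |empiricalPairing φ x| ^ 2) ^ k / k.factorial
      ≤ (4 * exp 1 * C ^ 2) ^ k := by
  calc ((Fintype.card ι : ℝ) * |empiricalPairing φ x| ^ 2) ^ k / k.factorial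
      ≤ ((k : ℝ) * C ^ 2) ^ k / k.factorial := by
        gcongr
        exact abs_empiricalPairing_le hφb x
    _ = (k : ℝ) ^ k / k.factorial * (C ^ 2) ^ k := by ring
    _ ≤ exp 1 ^ k * (C ^ 2) ^ k := by
        gcongr
        exact pow_div_factorial_le_exp_one_pow k
    _ ≤ (4 * exp 1 * C ^ 2) ^ k := by
        rw [← mul_pow]
        gcongr
        linarith [exp_pos 1]

variable [DecidableEq ι] [MeasurableSpace α] {ρ : Measure α} [IsProbabilityMeasure ρ]

lemma integral_pow_div_factorial_le_of_le_card (hφm : Measurable (uncurry φ))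
    (hφb : ∀ x y, |φ x y| ≤ C) (hcanc : ∫ x, ∫ y, φ x y ∂ρ ∂ρ = 0) [Nonempty ι] {k : ℕ}
    (hk : k ≤ Fintype.card ι) :
    ∫ x : ι → α, ((Fintype.card ι : ℝ) * |empiricalPairing φ x| ^ 2) ^ k / k.factorial
      ∂(Measure.pi fun _ => ρ) ≤ (exp 9 * C ^ 2) ^ k := by
  set n : ℝ := (Fintype.card ι : ℝ) with hn_def
  have hn : 0 < n := by rw [hn_def]; exact_mod_cast Fintype.card_pos
  have hpt (x : ι → α) : (n * |empiricalPairing φ x| ^ 2) ^ k / k.factorial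
      = (∑ i, ∑ j, φ (x i) (x j)) ^ (2 * k) / (n ^ (3 * k) * k.factorial) := by
    have hsq : n * (1 / n ^ 2 * ∑ i, ∑ j, φ (x i) (x j)) ^ 2
        = (∑ i, ∑ j, φ (x i) (x j)) ^ 2 / n ^ 3 := by
      field_simp
    rw [sq_abs, empiricalPairing, ← hn_def, hsq, div_pow, ← pow_mul, ← pow_mul, div_div]
  rw [integral_congr_ae (ae_of_all _ hpt), integral_div]
  calc _ ≤ k ^ k * n ^ (3 * k) * 625 ^ k * C ^ (2 * k) / (n ^ (3 * k) * k.factorial) := by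
        gcongr
        exact integral_sum_sum_pow_two_mul_le hφm hφb hcanc hk
    _ = (k : ℝ) ^ k / k.factorial * (625 * C ^ 2) ^ k := by
        field_simp
        ring
    _ ≤ exp 1 ^ k * (625 * C ^ 2) ^ k := by
        gcongr
        exact pow_div_factorial_le_exp_one_pow k
    _ ≤ (exp 9 * C ^ 2) ^ k := by
        rw [← mul_pow, ← mul_assoc]
        gcongr
        exact exp_one_mul_625_le_exp_nine

theorem lintegral_exp_empiricalPairing_le [Nonempty ι] (hφm : Measurable (uncurry φ))
    (hφb : ∀ x y, |φ x y| ≤ C) (hcanc : ∫ x, ∫ y, φ x y ∂ρ ∂ρ = 0)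
    (hα : exp 9 * C ^ 2 < 1) (hβ : 4 * exp 1 * C ^ 2 < 1) :
    ∫⁻ x : ι → α, ENNReal.ofReal (exp (Fintype.card ι * |empiricalPairing φ x| ^ 2))
        ∂(Measure.pi fun _ => ρ)
      ≤ ENNReal.ofReal (1 + exp 9 * C ^ 2 / (1 - exp 9 * C ^ 2)
          + 4 * exp 1 * C ^ 2 / (1 - 4 * exp 1 * C ^ 2)) := by
  have hm : Measurable fun x : ι → α => empiricalPairing φ x := by
    unfold empiricalPairing; fun_prop
  rw [lintegral_ofReal_exp_eq_tsum (by fun_prop) fun x => by positivity]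
  refine tsum_le_one_add_geometric (by positivity) hα (by positivity) hβ (by simp) fun k => ?_
  rcases le_or_gt (k + 1) (Fintype.card ι) with hk | hk
  · refine le_add_right ?_
    have hint : Integrable (fun x : ι → α =>
        (Fintype.card ι * |empiricalPairing φ x| ^ 2) ^ (k + 1) / (k + 1).factorial)
        (Measure.pi fun _ => ρ) := by
      refine .of_bound (by fun_prop) (((Fintype.card ι : ℝ) * C ^ 2) ^ (k + 1) / (k + 1).factorial)
        (ae_of_all _ fun x => ?_)
      rw [Real.norm_of_nonneg (by positivity)]
      gcongr
      exact abs_empiricalPairing_le hφb x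
    rw [← ofReal_integral_eq_lintegral_ofReal hint (ae_of_all _ fun x => by positivity)]
    exact ENNReal.ofReal_le_ofReal (integral_pow_div_factorial_le_of_le_card hφm hφb hcanc hk)
  · refine le_add_left ?_
    calc _ ≤ ∫⁻ _ : ι → α, ENNReal.ofReal ((4 * exp 1 * C ^ 2) ^ (k + 1))
          ∂(Measure.pi fun _ => ρ) :=
          lintegral_mono fun x =>
            ENNReal.ofReal_le_ofReal (pow_div_factorial_le_of_card_le hφb hk.le x)
      _ = _ := by simp

end EmpiricalPairing

theorem stmt2_general (d : ℕ) (ρ : Measure (Fin d → ℝ)) [IsProbabilityMeasure ρ]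
    (φ : (Fin d → ℝ) → (Fin d → ℝ) → ℝ) (hφm : Measurable (Function.uncurry φ))
    (Cφ : ℝ) (hφb : ∀ x y, |φ x y| ≤ Cφ)
    (hcanc : ∫ x, ∫ y, φ x y ∂ρ ∂ρ = 0)
    (hα : Real.exp 9 * Cφ ^ 2 < 1) (hβ : 4 * Real.exp 1 * Cφ ^ 2 < 1) :
    ∀ N : ℕ, 2 ≤ N →
      ∫⁻ x : Fin N → (Fin d → ℝ),
          ENNReal.ofReal
            (Real.exp ((N : ℝ) *
              |(1 / (N : ℝ) ^ 2) * ∑ i : Fin N, ∑ j : Fin N, φ (x i) (x j)| ^ 2))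
        ∂(Measure.pi fun _ : Fin N => ρ)
      ≤ ENNReal.ofReal
          (1 + (Real.exp 9 * Cφ ^ 2) / (1 - Real.exp 9 * Cφ ^ 2)
             + (4 * Real.exp 1 * Cφ ^ 2) / (1 - 4 * Real.exp 1 * Cφ ^ 2)) := by
  intro N hN
  have : Nonempty (Fin N) := ⟨⟨0, by omega⟩⟩
  have h := lintegral_exp_empiricalPairing_le (ι := Fin N) hφm hφb hcanc hα hβ
  simp only [empiricalPairing, Fintype.card_fin] at h
  exact h

/-- Modified exponential law of large numbers: for a probability measure `ρ̄` on `ℝ^d`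
and bounded `φ` with `∫∫ φ dρ̄ dρ̄ = 0` and `α₀ := e⁹‖φ‖²_∞ < 1`, `β₀ := 4e‖φ‖²_∞ < 1`,
one has for all `N ≥ 2`:
`∫ exp(N |⟨φ, μ_N ⊗ μ_N⟩|²) dρ̄^{⊗N} ≤ 1 + α₀/(1−α₀) + β₀/(1−β₀)`. -/
theorem stmt2 (d : ℕ) (ρ : Measure (Fin d → ℝ)) [IsProbabilityMeasure ρ]
    (φ : (Fin d → ℝ) → (Fin d → ℝ) → ℝ) (hφm : Measurable (Function.uncurry φ))
    (Cφ : ℝ) (hCφ : 0 ≤ Cφ) (hφb : ∀ x y, |φ x y| ≤ Cφ)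
    (hcanc : ∫ x, ∫ y, φ x y ∂ρ ∂ρ = 0)
    (hα : Real.exp 9 * Cφ ^ 2 < 1) (hβ : 4 * Real.exp 1 * Cφ ^ 2 < 1) :
    ∀ N : ℕ, 2 ≤ N →
      ∫⁻ x : Fin N → (Fin d → ℝ),
          ENNReal.ofReal
            (Real.exp ((N : ℝ) *
              |(1 / (N : ℝ) ^ 2) * ∑ i : Fin N, ∑ j : Fin N, φ (x i) (x j)| ^ 2))
        ∂(Measure.pi fun _ : Fin N => ρ)
      ≤ ENNReal.ofReal
          (1 + (Real.exp 9 * Cφ ^ 2) / (1 - Real.exp 9 * Cφ ^ 2)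
             + (4 * Real.exp 1 * Cφ ^ 2) / (1 - 4 * Real.exp 1 * Cφ ^ 2)) :=
  stmt2_general d ρ φ hφm Cφ hφb hcanc hα hβ
end

section
/- Let E be a separable Banach space and S : E → L⁰(Ω) a linear continuous map (with convergence in probability). Suppose there exists a random variable C(ω) ≥ 0 such that for every φ ∈ E, |S(φ)(ω)| ≤ C(ω)‖φ‖_E for ℙ-a.e. ω. Then there exists a measurable map ω ↦ S(ω) from (Ω, 𝓕, ℙ) into the dual space E′ such that ⟨S(ω), φ⟩ = S(φ)(ω) almost surely for each φ ∈ E. -/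
open MeasureTheory Filter Topology

/-!
On a countable dense subgroup `D ⊆ E`, the countably many a.s. relations
`S(d₁ + d₂) = S d₁ + S d₂` and `|S d| ≤ C ‖d‖` hold simultaneously off one null set. There
`d ↦ S d ω` is additive and Lipschitz, so it extends to a continuous additive map on `E`, which
is automatically `ℝ`-linear. Measurability in `ω` comes from writing the extension as a pointwise
limit of `S (aₙ)` with `aₙ ∈ D`, `aₙ → φ`; and since `S (aₙ) → S φ` in probability, the two
limits agree almost surely.
-/

theorem exists_countable_dense_addSubgroup (E : Type*) [AddCommGroup E] [TopologicalSpace E]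
    [TopologicalSpace.SeparableSpace E] : ∃ D : AddSubgroup E, Countable D ∧ Dense (D : Set E) := by
  have : Nonempty E := ⟨0⟩
  exact ⟨(Submodule.span ℤ (Set.range (TopologicalSpace.denseSeq E))).toAddSubgroup,
    inferInstanceAs (Countable (Submodule.span ℤ _)),
    (TopologicalSpace.denseRange_denseSeq E).mono Submodule.subset_span⟩

theorem AddSubgroup.exists_continuousLinearMap_extension {E F : Type*}
    [NormedAddCommGroup E] [NormedSpace ℝ E] [NormedAddCommGroup F] [NormedSpace ℝ F]
    [CompleteSpace F] {D : AddSubgroup E} (hD : Dense (D : Set E)) (f : D →+ F) (M : ℝ)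
    (hf : ∀ d, ‖f d‖ ≤ M * ‖d‖) : ∃ T : E →L[ℝ] F, ∀ d : D, T d = f d := by
  let fℤ : D →L[ℤ] F := ⟨f.toIntLinearMap, AddMonoidHomClass.continuous_of_bound f M hf⟩
  let ι : D →L[ℤ] E := ⟨D.subtype.toIntLinearMap, continuous_subtype_val⟩
  have hι_dense : DenseRange ι := by
    change Dense (Set.range ((↑) : D → E))
    rwa [Subtype.range_coe]
  have hι_unif : IsUniformInducing ι := isUniformEmbedding_subtype_val.isUniformInducing
  let T := fℤ.extend ι
  exact ⟨T.toAddMonoidHom.toRealLinearMap T.continuous,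
    fun d => ContinuousLinearMap.extend_eq fℤ hι_dense hι_unif d⟩

section BoundedAdditive

variable {E : Type*} [NormedAddCommGroup E]

/-- The bound is taken with a natural number `M`, so that for a random `s` the event
`IsBoundedAdditiveOn D s` is a countable union and intersection of measurable events. -/
def IsBoundedAdditiveOn (D : AddSubgroup E) (s : E → ℝ) : Prop :=
  (∀ d₁ d₂ : D, s (d₁ + d₂) = s d₁ + s d₂) ∧ ∃ M : ℕ, ∀ d : D, |s d| ≤ M * ‖(d : E)‖

theorem IsBoundedAdditiveOn.exists_continuousLinearMap [NormedSpace ℝ E] {D : AddSubgroup E}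
    {s : E → ℝ} (hD : Dense (D : Set E)) (hs : IsBoundedAdditiveOn D s) :
    ∃ T : E →L[ℝ] ℝ, ∀ d : D, T d = s d := by
  obtain ⟨hadd, M, hM⟩ := hs
  exact D.exists_continuousLinearMap_extension hD (AddMonoidHom.mk' (fun d : D => s d) hadd) M hM

variable {Ω : Type*} [MeasurableSpace Ω] {D : AddSubgroup E} [Countable D] {S : E → Ω → ℝ}

theorem measurableSet_isBoundedAdditiveOn (hS : ∀ φ, Measurable (S φ)) :
    MeasurableSet {ω | IsBoundedAdditiveOn D (S · ω)} := by
  simp only [IsBoundedAdditiveOn, Set.ofPred_and, Set.ofPred_forall, Set.ofPred_exists]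
  exact (MeasurableSet.iInter fun d₁ => .iInter fun d₂ =>
      measurableSet_eq_fun (hS _) ((hS _).add (hS _))).inter
    (.iUnion fun M => .iInter fun d => measurableSet_le (hS _).abs measurable_const)

theorem ae_isBoundedAdditiveOn {P : Measure Ω}
    (hadd : ∀ φ ψ, ∀ᵐ ω ∂P, S (φ + ψ) ω = S φ ω + S ψ ω) (C : Ω → ℝ)
    (hC : ∀ φ, ∀ᵐ ω ∂P, |S φ ω| ≤ C ω * ‖φ‖) : ∀ᵐ ω ∂P, IsBoundedAdditiveOn D (S · ω) := by
  filter_upwards [ae_all_iff.2 fun d₁ : D => ae_all_iff.2 fun d₂ : D => hadd d₁ d₂,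
    ae_all_iff.2 fun d : D => hC d] with ω hadd_ω hC_ω
  exact ⟨hadd_ω, ⌈C ω⌉₊, fun d => (hC_ω d).trans (by gcongr; exact Nat.le_ceil _)⟩

end BoundedAdditive

theorem stmt15_general {E : Type*} [NormedAddCommGroup E] [NormedSpace ℝ E]
    [TopologicalSpace.SeparableSpace E]
    {Ω : Type*} [MeasurableSpace Ω] (P : Measure Ω) [IsProbabilityMeasure P]
    (S : E → Ω → ℝ) (hmeas : ∀ φ, Measurable (S φ))
    (hadd : ∀ φ ψ, ∀ᵐ ω ∂P, S (φ + ψ) ω = S φ ω + S ψ ω)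
    (hcont : ∀ (φs : ℕ → E) (φ : E), Tendsto φs atTop (𝓝 φ) →
      ∀ ε : ℝ, 0 < ε →
        Tendsto (fun n => P {ω | ε ≤ |S (φs n) ω - S φ ω|}) atTop (𝓝 0))
    (C : Ω → ℝ)
    (hC : ∀ φ, ∀ᵐ ω ∂P, |S φ ω| ≤ C ω * ‖φ‖) :
    ∃ T : Ω → (E →L[ℝ] ℝ),
      (∀ φ, Measurable fun ω => T ω φ) ∧ ∀ φ, ∀ᵐ ω ∂P, T ω φ = S φ ω := by
  classical
  obtain ⟨D, _, hD⟩ := exists_countable_dense_addSubgroup E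
  set G := {ω | IsBoundedAdditiveOn D (S · ω)}
  have hext : ∀ ω ∈ G, ∃ T : E →L[ℝ] ℝ, ∀ d : D, T d = S d ω :=
    fun ω hω => IsBoundedAdditiveOn.exists_continuousLinearMap (s := (S · ω)) hD hω
  choose! T₀ hT₀ using hext
  let T := G.piecewise T₀ 0
  have hT_lim : ∀ φ (a : ℕ → E), (∀ n, a n ∈ D) → Tendsto a atTop (𝓝 φ) →
      ∀ ω ∈ G, Tendsto (fun n => S (a n) ω) atTop (𝓝 (T ω φ)) := by
    intro φ a haD ha ω hω
    have hT₀a : T₀ ω ∘ a = fun n => S (a n) ω := funext fun n => hT₀ ω hω ⟨a n, haD n⟩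
    simpa only [T, Set.piecewise_eq_of_mem _ _ _ hω, hT₀a] using
      ((T₀ ω).continuous.tendsto φ).comp ha
  refine ⟨T, fun φ => ?_, fun φ => ?_⟩
  all_goals obtain ⟨a, haD, ha⟩ := mem_closure_iff_seq_limit.1 (hD φ)
  · refine measurable_of_tendsto_metrizable (f := fun n => G.indicator (S (a n)))
      (fun n => (hmeas _).indicator (measurableSet_isBoundedAdditiveOn hmeas))
      (tendsto_pi_nhds.2 fun ω => ?_)
    by_cases hω : ω ∈ G
    · simpa [hω] using hT_lim φ a haD ha ω hω
    · simp [T, hω]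
  · have h_ae : TendstoInMeasure P (fun n => S (a n)) atTop (T · φ) :=
      tendstoInMeasure_of_tendsto_ae (fun n => (hmeas _).aestronglyMeasurable)
        ((ae_isBoundedAdditiveOn hadd C hC).mono (hT_lim φ a haD ha))
    have h_prob : TendstoInMeasure P (fun n => S (a n)) atTop (S φ) := by
      simpa only [tendstoInMeasure_iff_norm, Real.norm_eq_abs] using hcont _ φ ha
    exact tendstoInMeasure_ae_unique h_ae h_prob

/-- Pathwise realization of a linear continuous map into `L⁰(Ω)` (Flandoli):
if `S : E → L⁰(Ω)` is linear and continuous in probability, and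
`|S(φ)(ω)| ≤ C(ω)‖φ‖` a.s. for each `φ`, then there is a measurable map
`ω ↦ S(ω) ∈ E′` with `⟨S(ω), φ⟩ = S(φ)(ω)` a.s. for each `φ`. -/
theorem stmt15 {E : Type*} [NormedAddCommGroup E] [NormedSpace ℝ E]
    [TopologicalSpace.SeparableSpace E]
    {Ω : Type*} [MeasurableSpace Ω] (P : Measure Ω) [IsProbabilityMeasure P]
    (S : E → Ω → ℝ) (hmeas : ∀ φ, Measurable (S φ))
    (hadd : ∀ φ ψ, ∀ᵐ ω ∂P, S (φ + ψ) ω = S φ ω + S ψ ω)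
    (hsmul : ∀ (c : ℝ) (φ), ∀ᵐ ω ∂P, S (c • φ) ω = c * S φ ω)
    (hcont : ∀ (φs : ℕ → E) (φ : E), Tendsto φs atTop (𝓝 φ) →
      ∀ ε : ℝ, 0 < ε →
        Tendsto (fun n => P {ω | ε ≤ |S (φs n) ω - S φ ω|}) atTop (𝓝 0))
    (C : Ω → ℝ) (hC0 : ∀ ω, 0 ≤ C ω)
    (hC : ∀ φ, ∀ᵐ ω ∂P, |S φ ω| ≤ C ω * ‖φ‖) :
    ∃ T : Ω → (E →L[ℝ] ℝ),
      (∀ φ, Measurable fun ω => T ω φ) ∧ ∀ φ, ∀ᵐ ω ∂P, T ω φ = S φ ω :=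
  stmt15_general P S hmeas hadd hcont C hC
end
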